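/- arXiv:2310.12687 — 2 statements merged into one kernel-verified Lean document; each statement's English description precedes it below -/
import Mathlib

section
/- Fix n ≥ 1 and nonnegative integers s(2),…,s(n). The number of s-inversion functions (equivalently, the number of s-decreasing trees) equals the product ∏_{j=2}^{n} (1 + s(j) + s(j+1) + ⋯ + s(n)), i.e., (1+s(n))·(1+s(n)+s(n−1))⋯(1+s(n)+⋯+s(2)). -/
namespace SInvCount
open Finset

variable {n : ℕ}

def IsInv (s : Fin n → ℕ) (ℓ : ℕ) (g : Fin n → Fin n → ℕ) : Prop :=
  (∀ a c : Fin n, a < c → g c a ≤ s c) ∧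
  (∀ a b c : Fin n, a < b → b < c → 0 < g b a → g c b ≤ g c a) ∧
  (∀ a b c : Fin n, a < b → b < c → g b a < s b → g c a ≤ g c b) ∧
  (∀ a c : Fin n, (¬ a < c ∨ (a : ℕ) < ℓ) → g c a = 0)

def IsCh (s : Fin n → ℕ) (g : Fin n → Fin n → ℕ) (m : ℕ) (v : Fin n → ℕ) : Prop :=
  (∀ c : Fin n, v c ≤ s c) ∧
  (∀ c : Fin n, (c : ℕ) < m → v c = 0) ∧
  (∀ b c : Fin n, m ≤ (b : ℕ) → b < c →
     (0 < v b → g c b ≤ v c) ∧ (v b < s b → v c ≤ g c b))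

lemma fin_bdd {s : Fin n → ℕ} {P : (Fin n → ℕ) → Prop}
    (hP : ∀ v, P v → ∀ c, v c ≤ s c) : Finite {v // P v} := by
  apply Finite.of_injective
    (f := fun v : {v // P v} => fun c : Fin n => (⟨v.1 c, Nat.lt_succ_of_le (hP v.1 v.2 c)⟩ : Fin (s c + 1)))
  intro v w h
  apply Subtype.ext; funext c
  exact congrArg Fin.val (congrFun h c)

lemma inv_bdd {s : Fin n → ℕ} {ℓ : ℕ} {g : Fin n → Fin n → ℕ}
    (hg : IsInv s ℓ g) (c a : Fin n) : g c a ≤ s c := by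
  by_cases h : a < c
  · exact hg.1 a c h
  · rw [hg.2.2.2 a c (Or.inl h)]; exact Nat.zero_le _

lemma inv_finite (s : Fin n → ℕ) (ℓ : ℕ) : Finite {g : Fin n → Fin n → ℕ // IsInv s ℓ g} := by
  apply Finite.of_injective
    (f := fun g : {g // IsInv s ℓ g} => fun c a : Fin n =>
      (⟨g.1 c a, Nat.lt_succ_of_le (inv_bdd g.2 c a)⟩ : Fin (s c + 1)))
  intro v w h
  apply Subtype.ext; funext c a
  exact congrArg Fin.val (congrFun (congrFun h c) a)

lemma ch_finite (s : Fin n → ℕ) (g : Fin n → Fin n → ℕ) (m : ℕ) :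
    Finite {v // IsCh s g m v} := fin_bdd (fun v hv => hv.1)

/-- key comparability helper -/
lemma ch_le_aux {s : Fin n → ℕ} {g : Fin n → Fin n → ℕ} {m : ℕ} {w w' : Fin n → ℕ}
    (hw : IsCh s g m w) (hw' : IsCh s g m w') (b : Fin n)
    (hb : w' b < w b) (hmin : ∀ c, c < b → w c = w' c) : w' ≤ w := by
  intro c
  rcases lt_trichotomy c b with h | h | h
  · exact (hmin c h).ge
  · subst h; exact hb.le
  · have hmb : m ≤ (b : ℕ) := by
      by_contra hm
      have h1 := hw.2.1 b (by omega)
      have h2 := hw'.2.1 b (by omega)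
      omega
    have h1 := (hw.2.2 b c hmb h).1 (by omega)
    have h2 := (hw'.2.2 b c hmb h).2 (lt_of_lt_of_le hb (hw.1 b))
    exact h2.trans h1

lemma ch_comp {s : Fin n → ℕ} {g : Fin n → Fin n → ℕ} {m : ℕ} {w w' : Fin n → ℕ}
    (hw : IsCh s g m w) (hw' : IsCh s g m w') : w ≤ w' ∨ w' ≤ w := by
  by_cases hww : w = w'
  · exact Or.inl (le_of_eq hww)
  have hne : (univ.filter fun b : Fin n => w b ≠ w' b).Nonempty := by
    rw [Finset.filter_nonempty_iff]
    by_contra h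
    push_neg at h
    exact hww (funext fun b => h b (mem_univ b))
  set D := univ.filter fun b : Fin n => w b ≠ w' b with hD
  set b := D.min' hne with hbdef
  have hbD : b ∈ D := D.min'_mem hne
  have hbne : w b ≠ w' b := (Finset.mem_filter.mp hbD).2
  have hmin : ∀ c, c < b → w c = w' c := by
    intro c hc
    by_contra h
    exact absurd (D.min'_le c (Finset.mem_filter.mpr ⟨mem_univ c, h⟩)) (not_le.mpr hc)
  rcases lt_or_gt_of_ne hbne with h | h
  · exact Or.inl (ch_le_aux hw' hw b h (fun c hc => (hmin c hc).symm))
  · exact Or.inr (ch_le_aux hw hw' b h hmin)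

/-- the column of an inversion function at `m` is a chain element at level `m+1` -/
lemma col_ch {s : Fin n → ℕ} {g : Fin n → Fin n → ℕ} (hg : IsInv s 0 g) (m : Fin n) :
    IsCh s g ((m : ℕ) + 1) (fun c => g c m) := by
  refine ⟨fun c => inv_bdd hg c m, fun c hc => ?_, fun b c hmb hbc => ⟨?_, ?_⟩⟩
  · exact hg.2.2.2 m c (Or.inl (by rw [Fin.lt_def]; omega))
  · exact fun h0 => hg.2.1 m b c (by rw [Fin.lt_def]; omega) hbc h0
  · exact fun h0 => hg.2.2.1 m b c (by rw [Fin.lt_def]; omega) hbc h0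


variable {s : Fin n → ℕ} {g : Fin n → Fin n → ℕ}

def Cond (s : Fin n → ℕ) (g : Fin n → Fin n → ℕ) (mI : Fin n) (t : ℕ) (w : Fin n → ℕ) : Prop :=
  (0 < t → ∀ c, g c mI ≤ w c) ∧ (t < s mI → ∀ c, w c ≤ g c mI)

variable {s : Fin n → ℕ} {g : Fin n → Fin n → ℕ}

lemma gdiag (hg0 : ∀ a c : Fin n, ¬ a < c → g c a = 0) {c mI : Fin n} (h : (c:ℕ) ≤ mI) :
    g c mI = 0 := hg0 mI c (by rw [Fin.lt_def]; omega)

lemma peelCh_to (hg0 : ∀ a c : Fin n, ¬ a < c → g c a = 0) {m : ℕ} (hm : m < n)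
    (v : Fin n → ℕ) (hv : IsCh s g m v) :
    IsCh s g (m + 1) (Function.update v ⟨m, hm⟩ 0) ∧
      Cond s g ⟨m, hm⟩ (v ⟨m, hm⟩) (Function.update v ⟨m, hm⟩ 0) := by
  set mI : Fin n := ⟨m, hm⟩ with hmI
  refine ⟨⟨?_, ?_, ?_⟩, ?_, ?_⟩
  · intro c
    rcases eq_or_ne c mI with h | h
    · subst h; simp
    · rw [Function.update_of_ne h]; exact hv.1 c
  · intro c hc
    rcases eq_or_ne c mI with h | h
    · subst h; simp
    · rw [Function.update_of_ne h]
      exact hv.2.1 c (by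
        have : (c : ℕ) ≠ m := fun hh => h (Fin.ext hh)
        omega)
  · intro b c hmb hbc
    have hb : b ≠ mI := fun h => by subst h; simp [hmI] at hmb
    have hc : c ≠ mI := fun h => by
      subst h
      rw [Fin.lt_def] at hbc; simp [hmI] at hbc; omega
    rw [Function.update_of_ne hb, Function.update_of_ne hc]
    exact hv.2.2 b c (by omega) hbc
  · intro h0 c
    rcases eq_or_ne c mI with h | h
    · subst h; simp [gdiag hg0 (le_refl _)]
    · rw [Function.update_of_ne h]
      rcases lt_or_ge (m : ℕ) (c : ℕ) with hc | hc
      · exact (hv.2.2 mI c (le_refl m) (by rw [Fin.lt_def]; exact hc)).1 h0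
      · rw [gdiag hg0 hc]; exact Nat.zero_le _
  · intro hs c
    rcases eq_or_ne c mI with h | h
    · subst h; simp
    · rw [Function.update_of_ne h]
      rcases lt_or_ge (m : ℕ) (c : ℕ) with hc | hc
      · exact (hv.2.2 mI c (le_refl m) (by rw [Fin.lt_def]; exact hc)).2 hs
      · rw [hv.2.1 c (by
          have : (c : ℕ) ≠ m := fun hh => h (Fin.ext hh)
          omega)]
        exact Nat.zero_le _

lemma peelCh_inv {m : ℕ} (hm : m < n) (t : ℕ) (ht : t ≤ s ⟨m, hm⟩)
    (w : Fin n → ℕ) (hw : IsCh s g (m + 1) w) (hc : Cond s g ⟨m, hm⟩ t w) :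
    IsCh s g m (Function.update w ⟨m, hm⟩ t) := by
  set mI : Fin n := ⟨m, hm⟩ with hmI
  refine ⟨?_, ?_, ?_⟩
  · intro c
    rcases eq_or_ne c mI with h | h
    · subst h; simpa using ht
    · rw [Function.update_of_ne h]; exact hw.1 c
  · intro c hcm
    have h : c ≠ mI := fun hh => by subst hh; simp [hmI] at hcm
    rw [Function.update_of_ne h]
    exact hw.2.1 c (by omega)
  · intro b c hmb hbc
    have hcne : c ≠ mI := fun h => by
      subst h
      rw [Fin.lt_def] at hbc; simp [hmI] at hbc; omega
    rw [Function.update_of_ne hcne]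
    rcases eq_or_ne b mI with h | h
    · subst h
      rw [Function.update_self]
      exact ⟨fun h0 => hc.1 h0 c, fun hs => hc.2 hs c⟩
    · rw [Function.update_of_ne h]
      refine hw.2.2 b c ?_ hbc
      have : (b : ℕ) ≠ m := fun hh => h (Fin.ext hh)
      omega

def peelCh (hg0 : ∀ a c : Fin n, ¬ a < c → g c a = 0) (m : ℕ) (hm : m < n) :
    {v : Fin n → ℕ // IsCh s g m v} ≃
      Σ t : Fin (s ⟨m, hm⟩ + 1),
        {w : Fin n → ℕ // IsCh s g (m + 1) w ∧ Cond s g ⟨m, hm⟩ (t : ℕ) w} where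
  toFun v := ⟨⟨v.1 ⟨m, hm⟩, Nat.lt_succ_of_le (v.2.1 _)⟩,
    ⟨Function.update v.1 ⟨m, hm⟩ 0, peelCh_to hg0 hm v.1 v.2⟩⟩
  invFun tw := ⟨Function.update tw.2.1 ⟨m, hm⟩ (tw.1 : ℕ),
    peelCh_inv hm _ (Nat.lt_succ_iff.mp tw.1.2) _ tw.2.2.1 tw.2.2.2⟩
  left_inv v := by
    apply Subtype.ext
    simp only [Function.update_idem]
    exact Function.update_eq_self _ _
  right_inv tw := by
    have h2 : Function.update (Function.update tw.2.1 ⟨m, hm⟩ (tw.1 : ℕ)) ⟨m, hm⟩ 0 = tw.2.1 := by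
      rw [Function.update_idem]
      conv_rhs => rw [← Function.update_eq_self (⟨m, hm⟩ : Fin n) tw.2.1]
      rw [tw.2.2.1.2.1 ⟨m, hm⟩ (Nat.lt_succ_self m)]
    have h1 : Function.update tw.2.1 ⟨m, hm⟩ (tw.1 : ℕ) ⟨m, hm⟩ = (tw.1 : ℕ) :=
      Function.update_self _ _ _
    refine Sigma.ext (Fin.ext h1) ((Subtype.heq_iff_coe_eq ?_).mpr h2)
    intro x
    rw [show ((⟨Function.update tw.2.1 ⟨m, hm⟩ (tw.1:ℕ) ⟨m, hm⟩, _⟩ : Fin (s ⟨m,hm⟩ + 1)) : ℕ) = (tw.1 : ℕ) from h1]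

lemma ch_base {m : ℕ} (hnm : n ≤ m) : Nat.card {v : Fin n → ℕ // IsCh s g m v} = 1 := by
  have h0 : IsCh s g m (fun _ => 0) := ⟨fun c => Nat.zero_le _, fun c _ => rfl,
    fun b c _ _ => ⟨fun h => absurd h (lt_irrefl 0), fun _ => Nat.zero_le _⟩⟩
  haveI : Nonempty {v : Fin n → ℕ // IsCh s g m v} := ⟨⟨_, h0⟩⟩
  haveI : Subsingleton {v : Fin n → ℕ // IsCh s g m v} := ⟨fun v w => Subtype.ext (funext fun c => by
    rw [v.2.2.1 c (lt_of_lt_of_le c.2 hnm), w.2.2.1 c (lt_of_lt_of_le c.2 hnm)])⟩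
  exact Nat.card_unique

lemma ncard_eq (P : (Fin n → ℕ) → Prop) :
    Nat.card {w : Fin n → ℕ // P w} = ({w : Fin n → ℕ | P w}).ncard :=
  Nat.card_coe_set_eq _

lemma ch_ab {m : ℕ} {u : Fin n → ℕ} (hu : IsCh s g m u) :
    Nat.card {w : Fin n → ℕ // IsCh s g m w ∧ w ≤ u} +
      Nat.card {w : Fin n → ℕ // IsCh s g m w ∧ u ≤ w} =
      Nat.card {w : Fin n → ℕ // IsCh s g m w} + 1 := by
  have hA : {w : Fin n → ℕ | IsCh s g m w ∧ w ≤ u}.Finite := by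
    exact @Set.toFinite _ _ (fin_bdd (fun v hv => hv.1.1))
  have hB : {w : Fin n → ℕ | IsCh s g m w ∧ u ≤ w}.Finite := by
    exact @Set.toFinite _ _ (fin_bdd (fun v hv => hv.1.1))
  have hU : {w : Fin n → ℕ | IsCh s g m w ∧ w ≤ u} ∪ {w : Fin n → ℕ | IsCh s g m w ∧ u ≤ w}
      = {w : Fin n → ℕ | IsCh s g m w} := by
    ext w
    constructor
    · rintro (⟨h, _⟩ | ⟨h, _⟩) <;> exact h
    · intro h
      rcases ch_comp h hu with hle | hle
      · exact Or.inl ⟨h, hle⟩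
      · exact Or.inr ⟨h, hle⟩
  have hI : {w : Fin n → ℕ | IsCh s g m w ∧ w ≤ u} ∩ {w : Fin n → ℕ | IsCh s g m w ∧ u ≤ w}
      = {u} := by
    ext w
    constructor
    · rintro ⟨⟨_, h1⟩, ⟨_, h2⟩⟩
      exact le_antisymm h1 h2
    · rintro rfl
      exact ⟨⟨hu, le_refl _⟩, ⟨hu, le_refl _⟩⟩
  have key := Set.ncard_union_add_ncard_inter _ _ hA hB
  rw [hU, hI, Set.ncard_singleton] at key
  rw [ncard_eq, ncard_eq, ncard_eq]
  omega

lemma Tsplit {m : ℕ} (hm : m < n) :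
    ∑ k ∈ univ.filter (fun k : Fin n => m ≤ (k : ℕ)), s k
      = s ⟨m, hm⟩ + ∑ k ∈ univ.filter (fun k : Fin n => m + 1 ≤ (k : ℕ)), s k := by
  have h : univ.filter (fun k : Fin n => m ≤ (k : ℕ))
      = insert ⟨m, hm⟩ (univ.filter (fun k : Fin n => m + 1 ≤ (k : ℕ))) := by
    ext k
    simp [Fin.ext_iff]
    omega
  rw [h, Finset.sum_insert (by simp)]

lemma ch_card (hg : IsInv s 0 g) :
    ∀ d m : ℕ, n ≤ m + d →
      Nat.card {v : Fin n → ℕ // IsCh s g m v}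
        = 1 + ∑ k ∈ univ.filter (fun k : Fin n => m ≤ (k : ℕ)), s k := by
  intro d
  induction d with
  | zero =>
    intro m hnm
    rw [ch_base (by omega)]
    rw [Finset.filter_false_of_mem (fun k _ => by have := k.2; omega), Finset.sum_empty]
    rfl
  | succ d ih =>
    intro m hnm
    rcases le_or_gt n m with hnm' | hm
    · rw [ch_base hnm']
      rw [Finset.filter_false_of_mem (fun k _ => by have := k.2; omega), Finset.sum_empty]
      rfl
    · set mI : Fin n := ⟨m, hm⟩ with hmI
      set u : Fin n → ℕ := fun c => g c mI with hu
      have hugood : IsCh s g (m + 1) u := col_ch hg mI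
      have hN := ih (m + 1) (by omega)
      have hE := Nat.card_congr (peelCh (fun a c h => hg.2.2.2 a c (Or.inl h)) m hm (s := s))
      haveI hfin : ∀ t : ℕ, Finite {w : Fin n → ℕ // IsCh s g (m+1) w ∧ Cond s g mI t w} :=
        fun t => fin_bdd (fun v hv => hv.1.1)
      haveI : ∀ t : Fin (s mI + 1), Fintype {w : Fin n → ℕ // IsCh s g (m+1) w ∧ Cond s g mI (t : ℕ) w} :=
        fun t => Fintype.ofFinite _
      rw [hE, Nat.card_eq_fintype_card, Fintype.card_sigma]
      set f : ℕ → ℕ := fun t => Nat.card {w : Fin n → ℕ // IsCh s g (m+1) w ∧ Cond s g mI t w}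
        with hf
      have hsum : ∑ t : Fin (s mI + 1),
          Fintype.card {w : Fin n → ℕ // IsCh s g (m+1) w ∧ Cond s g mI (t : ℕ) w}
          = ∑ t ∈ Finset.range (s mI + 1), f t := by
        rw [← Fin.sum_univ_eq_sum_range f (s mI + 1)]
        exact Finset.sum_congr rfl (fun t _ => (Nat.card_eq_fintype_card).symm)
      rw [hsum]
      rcases Nat.eq_zero_or_pos (s mI) with hs0 | hspos
      · have hf0 : f 0 = Nat.card {v : Fin n → ℕ // IsCh s g (m+1) v} := by
          apply Nat.card_congr
          apply Equiv.subtypeEquivRight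
          intro w
          constructor
          · rintro ⟨h, _⟩; exact h
          · intro h
            exact ⟨h, fun h0 => absurd h0 (lt_irrefl 0), fun h0 => by omega⟩
        have h1 : ∑ t ∈ Finset.range (s mI + 1), f t = f 0 := by
          rw [hs0, Finset.sum_range_one]
        rw [h1, hf0, hN, Tsplit hm, hs0]
        omega
      · have hfA : f 0 = Nat.card {w : Fin n → ℕ // IsCh s g (m+1) w ∧ w ≤ u} := by
          apply Nat.card_congr
          apply Equiv.subtypeEquivRight
          intro w
          constructor
          · rintro ⟨h, _, h2⟩
            exact ⟨h, fun c => h2 hspos c⟩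
          · rintro ⟨h, h2⟩
            exact ⟨h, fun h0 => absurd h0 (lt_irrefl 0), fun _ c => h2 c⟩
        have hfB : f (s mI) = Nat.card {w : Fin n → ℕ // IsCh s g (m+1) w ∧ u ≤ w} := by
          apply Nat.card_congr
          apply Equiv.subtypeEquivRight
          intro w
          constructor
          · rintro ⟨h, h1, _⟩
            exact ⟨h, fun c => h1 hspos c⟩
          · rintro ⟨h, h1⟩
            exact ⟨h, fun _ c => h1 c, fun h0 => absurd h0 (lt_irrefl _)⟩
        have hmid : ∀ t : ℕ, 0 < t → t < s mI → f t = 1 := by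
          intro t h0 hts
          have hcond : Cond s g mI t u := ⟨fun _ c => le_refl _, fun _ c => le_refl _⟩
          haveI : Nonempty {w : Fin n → ℕ // IsCh s g (m+1) w ∧ Cond s g mI t w} :=
            ⟨⟨u, hugood, hcond⟩⟩
          haveI : Subsingleton {w : Fin n → ℕ // IsCh s g (m+1) w ∧ Cond s g mI t w} := by
            constructor
            intro w w'
            have hwu : ∀ (w : Fin n → ℕ), IsCh s g (m+1) w ∧ Cond s g mI t w → w = u := by
              rintro w ⟨_, h1, h2⟩
              exact funext fun c => le_antisymm (h2 hts c) (h1 h0 c)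
            apply Subtype.ext
            rw [hwu w.1 w.2, hwu w'.1 w'.2]
          exact Nat.card_unique
        have hab := ch_ab hugood
        have hsum2 : ∑ t ∈ Finset.range (s mI + 1), f t
            = ((∑ t ∈ Finset.range (s mI - 1), f (t + 1)) + f (s mI)) + f 0 := by
          have hrw : s mI = (s mI - 1) + 1 := by omega
          rw [Finset.sum_range_succ' f (s mI)]
          congr 1
          conv_lhs => rw [hrw]
          rw [Finset.sum_range_succ (fun t => f (t + 1)) (s mI - 1)]
          rw [show s mI - 1 + 1 = s mI from by omega]
        have hmidsum : ∑ t ∈ Finset.range (s mI - 1), f (t + 1) = s mI - 1 := by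
          rw [Finset.sum_congr rfl (fun t ht => hmid (t + 1) (by omega)
            (by have := Finset.mem_range.mp ht; omega))]
          simp
        rw [hsum2, hmidsum, hfA, hfB, Tsplit hm,
          show s (⟨m, hm⟩ : Fin n) = s mI from rfl]
        omega

lemma inv_mono {ℓ ℓ' : ℕ} (h : ℓ' ≤ ℓ) (hg : IsInv s ℓ g) : IsInv s ℓ' g :=
  ⟨hg.1, hg.2.1, hg.2.2.1, fun a c hac => hg.2.2.2 a c (hac.imp id (fun hh => by omega))⟩

lemma peelInv_to {ℓ : ℕ} (hl : ℓ < n) {g : Fin n → Fin n → ℕ} (hg : IsInv s ℓ g) :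
    IsInv s (ℓ + 1) (fun c a => if (a : ℕ) = ℓ then 0 else g c a) := by
  refine ⟨fun a c hac => ?_, fun a b c hab hbc h0 => ?_, fun a b c hab hbc hsb => ?_,
    fun a c hac => ?_⟩
  · by_cases h : (a : ℕ) = ℓ
    · simp [h]
    · simpa [h] using hg.1 a c hac
  · by_cases ha : (a : ℕ) = ℓ
    · simp [ha] at h0
    · by_cases hb : (b : ℕ) = ℓ
      · exfalso
        have : (a : ℕ) < ℓ := by rw [Fin.lt_def] at hab; omega
        simp only [if_neg ha] at h0
        rw [hg.2.2.2 a b (Or.inr this)] at h0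
        omega
      · have hbne : ¬ ((b : ℕ) = ℓ) := hb
        simp only [if_neg ha, if_neg hb] at *
        exact hg.2.1 a b c hab hbc h0
  · by_cases ha : (a : ℕ) = ℓ
    · simp [ha]
    · by_cases hb : (b : ℕ) = ℓ
      · have : (a : ℕ) < ℓ := by rw [Fin.lt_def] at hab; omega
        simp only [if_neg ha]
        rw [hg.2.2.2 a c (Or.inr this)]
        exact Nat.zero_le _
      · simp only [if_neg ha, if_neg hb] at *
        exact hg.2.2.1 a b c hab hbc hsb
  · by_cases h : (a : ℕ) = ℓ
    · simp [h]
    · simp only [if_neg h]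
      refine hg.2.2.2 a c (hac.imp id (fun hh => by omega))

lemma peelInv_col {ℓ : ℕ} (hl : ℓ < n) {g : Fin n → Fin n → ℕ} (hg : IsInv s ℓ g) :
    IsCh s (fun c a => if (a : ℕ) = ℓ then 0 else g c a) (ℓ + 1) (fun c => g c ⟨ℓ, hl⟩) := by
  refine ⟨fun c => inv_bdd hg c _, fun c hc => ?_, fun b c hmb hbc => ⟨?_, ?_⟩⟩
  · exact hg.2.2.2 _ c (Or.inl (by rw [Fin.lt_def]; simp; omega))
  · intro h0
    have hb : ¬ ((b : ℕ) = ℓ) := by omega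
    simp only [if_neg hb]
    exact hg.2.1 ⟨ℓ, hl⟩ b c (by rw [Fin.lt_def]; simp; omega) hbc h0
  · intro hsb
    have hb : ¬ ((b : ℕ) = ℓ) := by omega
    simp only [if_neg hb]
    exact hg.2.2.1 ⟨ℓ, hl⟩ b c (by rw [Fin.lt_def]; simp; omega) hbc hsb

lemma peelInv_inv {ℓ : ℕ} (hl : ℓ < n) {g' : Fin n → Fin n → ℕ} {v : Fin n → ℕ}
    (hg : IsInv s (ℓ + 1) g') (hv : IsCh s g' (ℓ + 1) v) :
    IsInv s ℓ (fun c a => if (a : ℕ) = ℓ then v c else g' c a) := by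
  refine ⟨fun a c hac => ?_, fun a b c hab hbc h0 => ?_, fun a b c hab hbc hsb => ?_,
    fun a c hac => ?_⟩
  · by_cases h : (a : ℕ) = ℓ
    · simpa [h] using hv.1 c
    · simpa [h] using inv_bdd hg c a
  · by_cases ha : (a : ℕ) = ℓ
    · have hb : ¬ ((b : ℕ) = ℓ) := by rw [Fin.lt_def] at hab; omega
      simp only [if_pos ha, if_neg hb] at *
      exact (hv.2.2 b c (by rw [Fin.lt_def] at hab; omega) hbc).1 h0
    · by_cases hb : (b : ℕ) = ℓ
      · exfalso
        have haℓ : (a : ℕ) < ℓ + 1 := by rw [Fin.lt_def] at hab; omega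
        simp only [if_neg ha] at h0
        rw [hg.2.2.2 a b (Or.inr haℓ)] at h0
        omega
      · simp only [if_neg ha, if_neg hb] at *
        exact hg.2.1 a b c hab hbc h0
  · by_cases ha : (a : ℕ) = ℓ
    · have hb : ¬ ((b : ℕ) = ℓ) := by rw [Fin.lt_def] at hab; omega
      simp only [if_pos ha, if_neg hb] at *
      exact (hv.2.2 b c (by rw [Fin.lt_def] at hab; omega) hbc).2 hsb
    · by_cases hb : (b : ℕ) = ℓ
      · have haℓ : (a : ℕ) < ℓ + 1 := by rw [Fin.lt_def] at hab; omega
        simp only [if_neg ha]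
        rw [hg.2.2.2 a c (Or.inr haℓ)]
        exact Nat.zero_le _
      · simp only [if_neg ha, if_neg hb] at *
        exact hg.2.2.1 a b c hab hbc hsb
  · by_cases h : (a : ℕ) = ℓ
    · simp only [if_pos h]
      rcases hac with hac | hac
      · exact hv.2.1 c (by rw [Fin.lt_def] at hac; omega)
      · omega
    · simp only [if_neg h]
      exact hg.2.2.2 a c (hac.imp id (fun hh => by omega))

def peelInv (ℓ : ℕ) (hl : ℓ < n) (s : Fin n → ℕ) :
    {g : Fin n → Fin n → ℕ // IsInv s ℓ g} ≃
      Σ g' : {g : Fin n → Fin n → ℕ // IsInv s (ℓ + 1) g},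
        {v : Fin n → ℕ // IsCh s g'.1 (ℓ + 1) v} where
  toFun g := ⟨⟨fun c a => if (a : ℕ) = ℓ then 0 else g.1 c a, peelInv_to hl g.2⟩,
    ⟨fun c => g.1 c ⟨ℓ, hl⟩, peelInv_col hl g.2⟩⟩
  invFun p := ⟨fun c a => if (a : ℕ) = ℓ then p.2.1 c else p.1.1 c a,
    peelInv_inv hl p.1.2 p.2.2⟩
  left_inv g := by
    apply Subtype.ext
    funext c a
    by_cases h : (a : ℕ) = ℓ
    · simp only [if_pos h]
      exact congrArg (g.1 c) (Fin.ext (show (a : ℕ) = ((⟨ℓ, hl⟩ : Fin n) : ℕ) from h)).symm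
    · simp only [if_neg h]
  right_inv p := by
    obtain ⟨⟨g', hg'⟩, v, hv⟩ := p
    have hcoe : (fun (c a : Fin n) => if (a : ℕ) = ℓ then 0
        else if (a : ℕ) = ℓ then v c else g' c a) = g' := by
      funext c a
      by_cases h : (a : ℕ) = ℓ
      · simp only [if_pos h]
        exact (hg'.2.2.2 a c (Or.inr (by omega))).symm
      · simp only [if_neg h]
    refine Sigma.ext (Subtype.ext hcoe)
      ((Subtype.heq_iff_coe_eq
        (fun x => iff_of_eq (congrArg (fun gg => IsCh s gg (ℓ + 1) x) hcoe))).mpr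
        (funext fun c => if_pos rfl))

lemma inv_base {ℓ : ℕ} (hl : n ≤ ℓ) (s : Fin n → ℕ) :
    Nat.card {g : Fin n → Fin n → ℕ // IsInv s ℓ g} = 1 := by
  have h0 : IsInv s ℓ (fun _ _ => 0) :=
    ⟨fun a c _ => Nat.zero_le _, fun a b c _ _ h => absurd h (lt_irrefl 0),
      fun a b c _ _ _ => le_refl 0, fun a c _ => rfl⟩
  haveI : Nonempty {g : Fin n → Fin n → ℕ // IsInv s ℓ g} := ⟨⟨_, h0⟩⟩
  haveI : Subsingleton {g : Fin n → Fin n → ℕ // IsInv s ℓ g} := ⟨fun v w => Subtype.ext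
    (funext fun c => funext fun a => by
      rw [v.2.2.2.2 a c (Or.inr (by have := a.2; omega)),
        w.2.2.2.2 a c (Or.inr (by have := a.2; omega))])⟩
  exact Nat.card_unique

lemma prod_empty_filter {ℓ : ℕ} (hl : n ≤ ℓ + 1) (F : Fin n → ℕ) :
    ∏ j ∈ univ.filter (fun j : Fin n => ℓ < (j : ℕ)), F j = 1 := by
  rw [Finset.filter_false_of_mem (fun k _ => by have := k.2; omega), Finset.prod_empty]

lemma inv_card (s : Fin n → ℕ) :
    ∀ d ℓ : ℕ, n ≤ ℓ + d →
      Nat.card {g : Fin n → Fin n → ℕ // IsInv s ℓ g}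
        = ∏ j ∈ univ.filter (fun j : Fin n => ℓ < (j : ℕ)),
            (1 + ∑ k ∈ univ.filter (fun k : Fin n => (j : ℕ) ≤ (k : ℕ)), s k) := by
  intro d
  induction d with
  | zero =>
    intro ℓ hnl
    rw [inv_base (by omega) s, prod_empty_filter (by omega)]
  | succ d ih =>
    intro ℓ hnl
    rcases le_or_gt n ℓ with hnl' | hl
    · rw [inv_base hnl' s, prod_empty_filter (by omega)]
    · have hE := Nat.card_congr (peelInv ℓ hl s)
      haveI : Finite {g : Fin n → Fin n → ℕ // IsInv s (ℓ + 1) g} := inv_finite s (ℓ + 1)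
      haveI : Fintype {g : Fin n → Fin n → ℕ // IsInv s (ℓ + 1) g} := Fintype.ofFinite _
      haveI : ∀ g' : {g : Fin n → Fin n → ℕ // IsInv s (ℓ + 1) g},
          Fintype {v : Fin n → ℕ // IsCh s g'.1 (ℓ + 1) v} := fun g' =>
        @Fintype.ofFinite _ (ch_finite s g'.1 (ℓ + 1))
      rw [hE, Nat.card_eq_fintype_card, Fintype.card_sigma]
      have hfib : ∀ g' : {g : Fin n → Fin n → ℕ // IsInv s (ℓ + 1) g},
          Fintype.card {v : Fin n → ℕ // IsCh s g'.1 (ℓ + 1) v}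
            = 1 + ∑ k ∈ univ.filter (fun k : Fin n => ℓ + 1 ≤ (k : ℕ)), s k := by
        intro g'
        rw [← Nat.card_eq_fintype_card]
        exact ch_card (inv_mono (Nat.zero_le _) g'.2) (d + 1) (ℓ + 1) (by omega)
      rw [Finset.sum_congr rfl (fun g' _ => hfib g'), Finset.sum_const, smul_eq_mul]
      have hbase : Fintype.card {g : Fin n → Fin n → ℕ // IsInv s (ℓ + 1) g}
          = ∏ j ∈ univ.filter (fun j : Fin n => ℓ + 1 < (j : ℕ)),
              (1 + ∑ k ∈ univ.filter (fun k : Fin n => (j : ℕ) ≤ (k : ℕ)), s k) := by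
        rw [← Nat.card_eq_fintype_card]
        exact ih (ℓ + 1) (by omega)
      rw [Finset.card_univ, hbase]
      rcases le_or_gt n (ℓ + 1) with hn1 | hn1
      · rw [prod_empty_filter (by omega), prod_empty_filter hn1,
          Finset.filter_false_of_mem (fun k _ => by have := k.2; omega), Finset.sum_empty]
        norm_num
      · have hins : univ.filter (fun j : Fin n => ℓ < (j : ℕ))
            = insert ⟨ℓ + 1, hn1⟩ (univ.filter (fun j : Fin n => ℓ + 1 < (j : ℕ))) := by
          ext j
          simp [Fin.ext_iff]
          omega
        rw [hins, Finset.prod_insert (by simp)]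
        have hval : ∑ k ∈ univ.filter (fun k : Fin n => ((⟨ℓ + 1, hn1⟩ : Fin n) : ℕ) ≤ (k : ℕ)), s k
            = ∑ k ∈ univ.filter (fun k : Fin n => ℓ + 1 ≤ (k : ℕ)), s k := rfl
        rw [hval]
        ring

end SInvCount

/-- The number of `s`-inversion functions (equivalently, of `s`-decreasing
trees): counting functions `g` on the pairs `(c,a)` with `1 ≤ a < c ≤ n`
(encoded as functions `Fin n → Fin n → ℕ` vanishing outside these pairs)
with `g c a ≤ s c`, transitive and planar, one gets
`∏_{j=2}^{n} (1 + s(j) + s(j+1) + ⋯ + s(n))` — here the index `i : Fin n`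
encodes the value `i+1`, so the product ranges over the indices `j` with
`j ≥ 1` and the inner sum over the indices `k ≥ j`. -/
theorem s_decreasing_trees_count (n : ℕ) (hn : 1 ≤ n) (s : Fin n → ℕ) :
    Nat.card {g : Fin n → Fin n → ℕ //
        (∀ a c : Fin n, a < c → g c a ≤ s c) ∧
        (∀ a b c : Fin n, a < b → b < c → 0 < g b a → g c b ≤ g c a) ∧
        (∀ a b c : Fin n, a < b → b < c → g b a < s b → g c a ≤ g c b) ∧
        (∀ a c : Fin n, ¬ a < c → g c a = 0)} =
      ∏ j ∈ Finset.univ.filter (fun j : Fin n => 0 < (j : ℕ)),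
        (1 + ∑ k ∈ Finset.univ.filter (fun k : Fin n => j ≤ k), s k) := by
  have e : Nat.card {g : Fin n → Fin n → ℕ //
        (∀ a c : Fin n, a < c → g c a ≤ s c) ∧
        (∀ a b c : Fin n, a < b → b < c → 0 < g b a → g c b ≤ g c a) ∧
        (∀ a b c : Fin n, a < b → b < c → g b a < s b → g c a ≤ g c b) ∧
        (∀ a c : Fin n, ¬ a < c → g c a = 0)}
      = Nat.card {g : Fin n → Fin n → ℕ // SInvCount.IsInv s 0 g} := by
    apply Nat.card_congr
    apply Equiv.subtypeEquivRight
    intro g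
    constructor
    · intro h
      exact ⟨h.1, h.2.1, h.2.2.1,
        fun a c hac => hac.elim (h.2.2.2 a c) (fun h' => absurd h' (Nat.not_lt_zero _))⟩
    · intro h
      exact ⟨h.1, h.2.1, h.2.2.1, fun a c hac => h.2.2.2 a c (Or.inl hac)⟩
  have h2 := SInvCount.inv_card (n := n) s n 0 (Nat.zero_add n).ge
  refine e.trans (h2.trans ?_)
  rfl
end

section
/- Fix n ≥ 1 and nonnegative integers s(2),…,s(n). The s-weak order is join-semidistributive and meet-semidistributive: for s-inversion functions x, y, z, if an element w is simultaneously a least upper bound of {x, y} and a least upper bound of {x, z} (within the componentwise-ordered set of s-inversion functions), then w is also a least upper bound of {x, m} where m is the greatest lower bound of {y, z}; and the dual statement holds with least upper bounds and greatest lower bounds exchanged. -/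
/-!
The join of `x` and `y` is the transitive closure of `x ⊔ y`: its `(c, a)` entry is the largest
value of `(x ⊔ y) c b` over the `b < c` reachable from `a` through positive entries. The
involution `g ↦ s - g` exchanges transitivity and planarity and reverses the order, so the meet is
the dual construction and meet-semidistributivity is the dual of join-semidistributivity.

For the latter, let `w = x ∨ y = x ∨ z` and `m = y ∧ z`; it suffices that `y` and `z` lie below
`V = x ∨ m`. This is shown entry by entry, rows in increasing order and, within a row, columns in
decreasing order. If `y` exceeds `V` at `(c, a)`, so does `z`: the column `b` witnessing
`y c a ≤ (x ∨ z) c a` is reachable from `a` in `x ⊔ m` too, because the rows of `z` below `c`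
lie below `V`. If both exceed `V` there, then `m c a < min (y c a) (z c a)`, so the meet has a
path from `a` to a column `b` with `min (y c b) (z c b) < min (y c a) (z c a)`. But along this
path every column either stays reachable from `a` in `x ⊔ m` or can be skipped, and planarity
keeps `y c ·` and `z c ·` from dropping.
-/

/-- `g` is an `s`-inversion function. -/
def IsSInvFun (n : ℕ) (s : Fin n → ℕ) (g : Fin n → Fin n → ℕ) : Prop :=
  (∀ a c : Fin n, a < c → g c a ≤ s c) ∧
  (∀ a b c : Fin n, a < b → b < c → 0 < g b a → g c b ≤ g c a) ∧
  (∀ a b c : Fin n, a < b → b < c → g b a < s b → g c a ≤ g c b)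

/-- The componentwise order on `s`-inversion functions (the `s`-weak order). -/
def SLe (n : ℕ) (g h : Fin n → Fin n → ℕ) : Prop :=
  ∀ a c : Fin n, a < c → g c a ≤ h c a

/-- `w` is a least upper bound of `{a, b}` within the componentwise-ordered
set of `s`-inversion functions. -/
def IsSLub (n : ℕ) (s : Fin n → ℕ) (w a b : Fin n → Fin n → ℕ) : Prop :=
  IsSInvFun n s w ∧ SLe n a w ∧ SLe n b w ∧
    ∀ u : Fin n → Fin n → ℕ, IsSInvFun n s u → SLe n a u → SLe n b u →
      SLe n w u

/-- `w` is a greatest lower bound of `{a, b}` within the componentwise-ordered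
set of `s`-inversion functions. -/
def IsSGlb (n : ℕ) (s : Fin n → ℕ) (w a b : Fin n → Fin n → ℕ) : Prop :=
  IsSInvFun n s w ∧ SLe n w a ∧ SLe n w b ∧
    ∀ u : Fin n → Fin n → ℕ, IsSInvFun n s u → SLe n u a → SLe n u b →
      SLe n u w

theorem Relation.ReflTransGen.exists_step_across {α : Type*} [LinearOrder α]
    {r : α → α → Prop} {a b e : α} (h : Relation.ReflTransGen r a e) (hab : a < b)
    (hbe : b ≤ e) :
    ∃ p q, Relation.ReflTransGen r a p ∧ p < b ∧ r p q ∧ b ≤ q ∧ Relation.ReflTransGen r q e := by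
  induction h using Relation.ReflTransGen.head_induction_on with
  | refl => exact absurd hbe (not_le.2 hab)
  | @head a q hstep hrest ih =>
    by_cases hbq : b ≤ q
    · exact ⟨a, q, .refl, hab, hstep, hbq, hrest⟩
    · obtain ⟨p, q', hp, hpb, hpq, hbq', hq'⟩ := ih (not_le.1 hbq)
      exact ⟨p, q', .head hstep hp, hpb, hpq, hbq', hq'⟩

theorem SLe.trans {n : ℕ} {g h k : Fin n → Fin n → ℕ} (hgh : SLe n g h) (hhk : SLe n h k) :
    SLe n g k :=
  fun a c hac => (hgh a c hac).trans (hhk a c hac)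

theorem IsSLub.sle {n : ℕ} {s : Fin n → ℕ} {w w' a b : Fin n → Fin n → ℕ}
    (h : IsSLub n s w a b) (h' : IsSLub n s w' a b) : SLe n w w' :=
  h.2.2.2 w' h'.1 h'.2.1 h'.2.2.1

namespace SWeakOrder

open Relation

variable {n : ℕ}

section TransClosure

def PosStep (θ : Fin n → Fin n → ℕ) (p q : Fin n) : Prop := p < q ∧ 0 < θ q p

abbrev Reach (θ : Fin n → Fin n → ℕ) : Fin n → Fin n → Prop := ReflTransGen (PosStep θ)

open Classical in
noncomputable def transClosure (θ : Fin n → Fin n → ℕ) (c a : Fin n) : ℕ :=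
  Finset.univ.sup fun b => if Reach θ a b ∧ b < c then θ c b else 0

variable {θ φ : Fin n → Fin n → ℕ} {a b c : Fin n}

theorem Reach.le (h : Reach θ a b) : a ≤ b := by
  have : ReflTransGen (· ≤ ·) a b := ReflTransGen.mono (fun _ _ hpq => hpq.1.le) _ _ h
  rwa [reflTransGen_eq_self] at this

theorem transClosure_le_iff {M : ℕ} :
    transClosure θ c a ≤ M ↔ ∀ b, Reach θ a b → b < c → θ c b ≤ M := by
  classical
  simp only [transClosure, Finset.sup_le_iff, Finset.mem_univ, true_implies]
  refine forall_congr' fun b => ?_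
  split_ifs with h
  · exact ⟨fun H _ _ => H, fun H => H h.1 h.2⟩
  · exact ⟨fun _ h₁ h₂ => absurd ⟨h₁, h₂⟩ h, fun _ => Nat.zero_le M⟩

theorem le_transClosure_of_reach (h : Reach θ a b) (hbc : b < c) :
    θ c b ≤ transClosure θ c a :=
  transClosure_le_iff.1 le_rfl b h hbc

theorem le_transClosure (hac : a < c) : θ c a ≤ transClosure θ c a :=
  le_transClosure_of_reach .refl hac

theorem exists_of_lt_transClosure {M : ℕ} (h : M < transClosure θ c a) :
    ∃ b, Reach θ a b ∧ b < c ∧ M < θ c b := by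
  by_contra! H
  exact h.not_ge (transClosure_le_iff.2 H)

theorem transClosure_anti (h : Reach θ a b) : transClosure θ c b ≤ transClosure θ c a :=
  transClosure_le_iff.2 fun _ he hec => le_transClosure_of_reach (h.trans he) hec

theorem reach_of_transClosure_pos (h : 0 < transClosure θ c a) : Reach θ a c := by
  obtain ⟨b, hab, hbc, hpos⟩ := exists_of_lt_transClosure h
  exact hab.tail ⟨hbc, hpos⟩

theorem reach_of_le_transClosure
    (hθ : ∀ p q, p < q → q < c → θ q p ≤ transClosure φ q p) (h : Reach θ a b) (hbc : b < c) :
    Reach φ a b := by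
  induction h with
  | refl => exact .refl
  | @tail p q _ hpq ih =>
    exact (ih (hpq.1.trans hbc)).trans
      (reach_of_transClosure_pos (hpq.2.trans_le (hθ p q hpq.1 hbc)))

theorem le_of_reach {u : Fin n → Fin n → ℕ}
    (hu : ∀ a b c : Fin n, a < b → b < c → 0 < u b a → u c b ≤ u c a)
    (h : Reach u a b) (hbc : b < c) : u c b ≤ u c a := by
  induction h with
  | refl => exact le_rfl
  | @tail p q _ hpq ih =>
    exact (hu p q c hpq.1 hbc hpq.2).trans (ih (hpq.1.trans hbc))

theorem transClosure_le {u : Fin n → Fin n → ℕ}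
    (hu : ∀ a b c : Fin n, a < b → b < c → 0 < u b a → u c b ≤ u c a) (hθu : SLe n θ u) :
    SLe n (transClosure θ) u := by
  intro a c _
  refine transClosure_le_iff.2 fun b hab hbc => (hθu b c hbc).trans (le_of_reach hu ?_ hbc)
  exact ReflTransGen.mono (fun p q hpq => ⟨hpq.1, hpq.2.trans_le (hθu p q hpq.1)⟩) _ _ hab

variable {s : Fin n → ℕ}

/-- By planarity, the step of the path that jumps over `b` can start at `b` instead. -/
theorem reach_of_transClosure_lt
    (hplanar : ∀ a b c : Fin n, a < b → b < c → θ b a < s b → θ c a ≤ θ c b)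
    {e : Fin n} (h : Reach θ a e) (hab : a < b) (hbe : b ≤ e)
    (hsat : transClosure θ b a < s b) : Reach θ b e := by
  obtain ⟨p, q, hap, hpb, hpq, hbq, hqe⟩ := h.exists_step_across hab hbe
  rcases hbq.eq_or_lt with rfl | hbq
  · exact hqe
  · have hθ : θ q p ≤ θ q b :=
      hplanar p b q hpb hbq ((le_transClosure_of_reach hap hpb).trans_lt hsat)
    exact .head ⟨hbq, hpq.2.trans_le hθ⟩ hqe

theorem isSInvFun_transClosure (hbound : ∀ a c : Fin n, a < c → θ c a ≤ s c)
    (hplanar : ∀ a b c : Fin n, a < b → b < c → θ b a < s b → θ c a ≤ θ c b) :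
    IsSInvFun n s (transClosure θ) := by
  refine ⟨fun a c _ => transClosure_le_iff.2 fun b _ hbc => hbound b c hbc, ?_, ?_⟩
  · exact fun a b c _ _ hpos => transClosure_anti (reach_of_transClosure_pos hpos)
  · intro a b c hab hbc hsat
    refine transClosure_le_iff.2 fun e hae hec => ?_
    rcases lt_or_ge e b with heb | hbe
    · exact (hplanar e b c heb hbc ((le_transClosure_of_reach hae heb).trans_lt hsat)).trans
        (le_transClosure hbc)
    · exact le_transClosure_of_reach (reach_of_transClosure_lt hplanar hae hab hbe hsat) hec

theorem le_transClosure_sup_left {x y : Fin n → Fin n → ℕ} : SLe n x (transClosure (x ⊔ y)) :=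
  fun _ _ hac => le_sup_left.trans (le_transClosure (θ := x ⊔ y) hac)

theorem le_transClosure_sup_right {x y : Fin n → Fin n → ℕ} : SLe n y (transClosure (x ⊔ y)) :=
  fun _ _ hac => le_sup_right.trans (le_transClosure (θ := x ⊔ y) hac)

theorem isSLub_transClosure_sup {x y : Fin n → Fin n → ℕ} (hx : IsSInvFun n s x)
    (hy : IsSInvFun n s y) : IsSLub n s (transClosure (x ⊔ y)) x y := by
  refine ⟨isSInvFun_transClosure (fun a c hac => sup_le (hx.1 a c hac) (hy.1 a c hac)) ?_,
    le_transClosure_sup_left, le_transClosure_sup_right,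
    fun u hu hxu hyu => transClosure_le hu.2.1 fun a c hac => sup_le (hxu a c hac) (hyu a c hac)⟩
  intro a b c hab hbc hsat
  obtain ⟨hxs, hys⟩ := sup_lt_iff.1 hsat
  exact sup_le_sup (hx.2.2 a b c hab hbc hxs) (hy.2.2 a b c hab hbc hys)

end TransClosure

section Duality

variable {s : Fin n → ℕ} {g h w a b : Fin n → Fin n → ℕ}

def dual (s : Fin n → ℕ) (g : Fin n → Fin n → ℕ) : Fin n → Fin n → ℕ := fun c a => s c - g c a

theorem isSInvFun_dual (hg : IsSInvFun n s g) : IsSInvFun n s (dual s g) := by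
  refine ⟨fun _ _ _ => Nat.sub_le _ _, fun a b c hab hbc hpos => ?_, fun a b c hab hbc hlt => ?_⟩
  · exact Nat.sub_le_sub_left (hg.2.2 a b c hab hbc (tsub_pos_iff_lt.1 hpos)) _
  · refine Nat.sub_le_sub_left (hg.2.1 a b c hab hbc ?_) _
    simp only [dual] at hlt
    omega

theorem dual_le_dual (hgh : SLe n g h) : SLe n (dual s h) (dual s g) :=
  fun a c hac => Nat.sub_le_sub_left (hgh a c hac) _

theorem dual_le_dual_iff (hg : ∀ a c : Fin n, a < c → g c a ≤ s c) :
    SLe n (dual s h) (dual s g) ↔ SLe n g h :=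
  ⟨fun H a c hac => (tsub_le_tsub_iff_left (hg a c hac)).1 (H a c hac), dual_le_dual⟩

theorem dual_le_comm : SLe n (dual s g) h ↔ SLe n (dual s h) g :=
  ⟨fun H a c hac => tsub_le_iff_tsub_le.1 (H a c hac),
    fun H a c hac => tsub_le_iff_tsub_le.1 (H a c hac)⟩

theorem le_dual_comm (hg : ∀ a c : Fin n, a < c → g c a ≤ s c)
    (hh : ∀ a c : Fin n, a < c → h c a ≤ s c) : SLe n g (dual s h) ↔ SLe n h (dual s g) :=
  ⟨fun H a c hac => (le_tsub_iff_le_tsub (hg a c hac) (hh a c hac)).1 (H a c hac),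
    fun H a c hac => (le_tsub_iff_le_tsub (hh a c hac) (hg a c hac)).1 (H a c hac)⟩

theorem _root_.IsSGlb.dual (hw : IsSGlb n s w a b) :
    IsSLub n s (dual s w) (dual s a) (dual s b) :=
  ⟨isSInvFun_dual hw.1, dual_le_dual hw.2.1, dual_le_dual hw.2.2.1, fun _ hu hau hbu =>
    dual_le_comm.1 (hw.2.2.2 _ (isSInvFun_dual hu) (dual_le_comm.1 hau) (dual_le_comm.1 hbu))⟩

theorem _root_.IsSLub.dual (ha : ∀ p q : Fin n, p < q → a q p ≤ s q)
    (hb : ∀ p q : Fin n, p < q → b q p ≤ s q) (hw : IsSLub n s w a b) :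
    IsSGlb n s (dual s w) (dual s a) (dual s b) :=
  ⟨isSInvFun_dual hw.1, dual_le_dual hw.2.1, dual_le_dual hw.2.2.1, fun _ hu hua hub =>
    (le_dual_comm hw.1.1 hu.1).1 (hw.2.2.2 _ (isSInvFun_dual hu)
      ((le_dual_comm hu.1 ha).1 hua) ((le_dual_comm hu.1 hb).1 hub))⟩

theorem isSGlb_of_isSLub_dual (hw : IsSInvFun n s w)
    (h : IsSLub n s (dual s w) (dual s a) (dual s b)) : IsSGlb n s w a b :=
  ⟨hw, (dual_le_dual_iff hw.1).1 h.2.1, (dual_le_dual_iff hw.1).1 h.2.2.1, fun _ hu hua hub =>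
    (dual_le_dual_iff hu.1).1 (h.2.2.2 _ (isSInvFun_dual hu) (dual_le_dual hua) (dual_le_dual hub))⟩

end Duality

section Meet

variable {s : Fin n → ℕ} {y z : Fin n → Fin n → ℕ} {a c p q : Fin n}

noncomputable def meet (s : Fin n → ℕ) (y z : Fin n → Fin n → ℕ) : Fin n → Fin n → ℕ :=
  dual s (transClosure (dual s y ⊔ dual s z))

theorem isSInvFun_meet (hy : IsSInvFun n s y) (hz : IsSInvFun n s z) :
    IsSInvFun n s (meet s y z) :=
  isSInvFun_dual (isSLub_transClosure_sup (isSInvFun_dual hy) (isSInvFun_dual hz)).1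

theorem meet_le_left : SLe n (meet s y z) y := dual_le_comm.1 le_transClosure_sup_left

theorem meet_le_right : SLe n (meet s y z) z := dual_le_comm.1 le_transClosure_sup_right

theorem posStep_dual_sup_iff :
    PosStep (dual s y ⊔ dual s z) p q ↔ p < q ∧ (y q p < s q ∨ z q p < s q) := by
  simp only [PosStep, Pi.sup_apply, dual, lt_sup_iff, tsub_pos_iff_lt]

theorem exists_of_meet_lt {v : ℕ} (hv : v ≤ s c) (h : meet s y z c a < v) :
    ∃ b, Reach (dual s y ⊔ dual s z) a b ∧ b < c ∧ (y c b < v ∨ z c b < v) := by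
  have hlt : s c - v < transClosure (dual s y ⊔ dual s z) c a := by
    have hmeet : meet s y z c a = s c - transClosure (dual s y ⊔ dual s z) c a := rfl
    omega
  obtain ⟨b, hab, hbc, hb⟩ := exists_of_lt_transClosure hlt
  simp only [Pi.sup_apply, dual, lt_sup_iff] at hb
  exact ⟨b, hab, hbc, by omega⟩

end Meet

section JoinSemidistrib

variable {s : Fin n → ℕ} {x y z m : Fin n → Fin n → ℕ} {a c : Fin n}

theorem lt_right_of_lt_left (hyz : SLe n y (transClosure (x ⊔ z)))
    (hrow : ∀ c' < c, ∀ a' < c', z c' a' ≤ transClosure (x ⊔ m) c' a')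
    (hright : ∀ e, a < e → e < c → z c e ≤ transClosure (x ⊔ m) c e) (hac : a < c)
    (h : transClosure (x ⊔ m) c a < y c a) : transClosure (x ⊔ m) c a < z c a := by
  obtain ⟨b, hab, hbc, hb⟩ := exists_of_lt_transClosure (h.trans_le (hyz a c hac))
  have hab' : Reach (x ⊔ m) a b := reach_of_le_transClosure
    (fun p q hpq hqc => sup_le (le_transClosure_sup_left p q hpq) (hrow q hqc p hpq)) hab hbc
  have hxb : x c b ≤ transClosure (x ⊔ m) c a :=
    le_sup_left.trans (le_transClosure_of_reach hab' hbc)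
  have hzb : transClosure (x ⊔ m) c a < z c b := (lt_sup_iff.1 hb).resolve_left hxb.not_gt
  rcases hab'.le.eq_or_lt with rfl | hab''
  · exact hzb
  · exact absurd ((hright b hab'' hbc).trans (transClosure_anti hab')) hzb.not_ge

section Row

variable (hy : IsSInvFun n s y) (hz : IsSInvFun n s z)
  (hrow : ∀ c' < c, ∀ a' < c', (y ⊔ z) c' a' ≤ transClosure (x ⊔ m) c' a')
  (hright : ∀ e, a < e → e < c → (y ⊔ z) c e ≤ transClosure (x ⊔ m) c e)
  {v : ℕ} (hv : transClosure (x ⊔ m) c a < v)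
include hy hz hrow hright hv

theorem le_of_dual_step {d q : Fin n} (had : Reach (x ⊔ m) a d) (hdq : d < q) (hqc : q < c)
    (hstep : y q d < s q ∨ z q d < s q) (hyd : v ≤ y c d) (hzd : v ≤ z c d) :
    v ≤ y c q ∧ v ≤ z c q := by
  wlog hys : y q d < s q generalizing y z with H
  · exact (H hz hy (fun c' h a' h' => (sup_comm _ _).trans_le (hrow c' h a' h'))
      (fun e h h' => (sup_comm _ _).trans_le (hright e h h')) hstep.symm hzd hyd
      (hstep.resolve_left hys)).symm
  have hyq : v ≤ y c q := hyd.trans (hy.2.2 d q c hdq hqc hys)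
  refine ⟨hyq, le_of_not_gt fun hzq => ?_⟩
  have hzs : s q ≤ z q d :=
    le_of_not_gt fun h => (hzd.trans (hz.2.2 d q c hdq hqc h)).not_gt hzq
  have hpos : 0 < transClosure (x ⊔ m) q d :=
    (Nat.zero_le _).trans_lt (hys.trans_le (hzs.trans (le_sup_right.trans (hrow q hqc d hdq))))
  have haq : Reach (x ⊔ m) a q := had.trans (reach_of_transClosure_pos hpos)
  have : v ≤ transClosure (x ⊔ m) c a := calc
    v ≤ y c q := hyq
    _ ≤ transClosure (x ⊔ m) c q := le_sup_left.trans (hright q (had.le.trans_lt hdq) hqc)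
    _ ≤ transClosure (x ⊔ m) c a := transClosure_anti haq
  exact hv.not_ge this

theorem exists_reach_of_reach_dual (hya : v ≤ y c a) (hza : v ≤ z c a) {b : Fin n}
    (hab : Reach (dual s y ⊔ dual s z) a b) (hbc : b < c) :
    ∃ d, Reach (x ⊔ m) a d ∧ v ≤ y c d ∧ v ≤ z c d ∧
      (d = b ∨ (d < b ∧ 0 < s b ∧ y b d = 0 ∧ z b d = 0)) := by
  induction hab with
  | refl => exact ⟨a, .refl, hya, hza, .inl rfl⟩
  | @tail p q _ hpq ih =>
    obtain ⟨hpq, hstep⟩ := posStep_dual_sup_iff.1 hpq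
    obtain ⟨d, had, hyd, hzd, hdp⟩ := ih (hpq.trans hbc)
    -- if `p` was skipped, planarity at `y p d = z p d = 0 < s p` turns `p → q` into `d → q`
    have hdq : d < q ∧ (y q d < s q ∨ z q d < s q) := by
      rcases hdp with rfl | ⟨hdp, hsp, hy0, hz0⟩
      · exact ⟨hpq, hstep⟩
      · exact ⟨hdp.trans hpq, hstep.imp
          (fun h => (hy.2.2 d p q hdp hpq (hy0 ▸ hsp)).trans_lt h)
          (fun h => (hz.2.2 d p q hdp hpq (hz0 ▸ hsp)).trans_lt h)⟩
    obtain ⟨hyq, hzq⟩ := le_of_dual_step hy hz hrow hright hv had hdq.1 hbc hdq.2 hyd hzd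
    by_cases hV : 0 < transClosure (x ⊔ m) q d
    · exact ⟨q, had.trans (reach_of_transClosure_pos hV), hyq, hzq, .inl rfl⟩
    · have h0 := hrow q hbc d hdq.1
      simp only [Pi.sup_apply, sup_le_iff] at h0
      exact ⟨d, had, hyd, hzd, .inr ⟨hdq.1, by omega, by omega, by omega⟩⟩

end Row

theorem not_lt_and_lt (hy : IsSInvFun n s y) (hz : IsSInvFun n s z)
    (hm : SLe n (meet s y z) m)
    (hrow : ∀ c' < c, ∀ a' < c', (y ⊔ z) c' a' ≤ transClosure (x ⊔ m) c' a')
    (hright : ∀ e, a < e → e < c → (y ⊔ z) c e ≤ transClosure (x ⊔ m) c e) (hac : a < c) :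
    ¬ (transClosure (x ⊔ m) c a < y c a ∧ transClosure (x ⊔ m) c a < z c a) := by
  rintro ⟨hya, hza⟩
  have hv : transClosure (x ⊔ m) c a < min (y c a) (z c a) := lt_min hya hza
  have hmeet : meet s y z c a < min (y c a) (z c a) :=
    (hm a c hac).trans_lt ((le_transClosure_sup_right a c hac).trans_lt hv)
  obtain ⟨b, hab, hbc, hb⟩ :=
    exists_of_meet_lt ((min_le_left _ _).trans (hy.1 a c hac)) hmeet
  obtain ⟨d, -, hyd, hzd, hdb⟩ := exists_reach_of_reach_dual hy hz hrow hright hv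
    (min_le_left _ _) (min_le_right _ _) hab hbc
  rcases hdb with rfl | ⟨hdb, hsb, hy0, hz0⟩
  · omega
  · have := hy.2.2 d b c hdb hbc (hy0 ▸ hsb)
    have := hz.2.2 d b c hdb hbc (hz0 ▸ hsb)
    omega

theorem sup_le_transClosure_sup (hy : IsSInvFun n s y) (hz : IsSInvFun n s z)
    (hyz : SLe n y (transClosure (x ⊔ z))) (hzy : SLe n z (transClosure (x ⊔ y)))
    (hm : SLe n (meet s y z) m) : SLe n (y ⊔ z) (transClosure (x ⊔ m)) := by
  intro a c hac
  induction c using WellFoundedLT.induction generalizing a with | _ c hrow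
  induction a using WellFoundedGT.induction with | _ a hright
  have hyz' := lt_right_of_lt_left hyz (fun c' h a' h' => le_sup_right.trans (hrow c' h a' h'))
    (fun e h h' => le_sup_right.trans (hright e h h')) hac
  have hzy' := lt_right_of_lt_left hzy (fun c' h a' h' => le_sup_left.trans (hrow c' h a' h'))
    (fun e h h' => le_sup_left.trans (hright e h h')) hac
  have hboth := not_lt_and_lt hy hz hm hrow hright hac
  exact sup_le (le_of_not_gt fun h => hboth ⟨h, hyz' h⟩) (le_of_not_gt fun h => hboth ⟨hzy' h, h⟩)

theorem join_semidistrib {w : Fin n → Fin n → ℕ} (hx : IsSInvFun n s x) (hy : IsSInvFun n s y)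
    (hz : IsSInvFun n s z) (hxy : IsSLub n s w x y) (hxz : IsSLub n s w x z)
    (hm : IsSGlb n s m y z) : IsSLub n s w x m := by
  have hyz : SLe n y (transClosure (x ⊔ z)) :=
    hxy.2.2.1.trans (hxz.sle (isSLub_transClosure_sup hx hz))
  have hzy : SLe n z (transClosure (x ⊔ y)) :=
    hxz.2.2.1.trans (hxy.sle (isSLub_transClosure_sup hx hy))
  have hmeet : SLe n (meet s y z) m := hm.2.2.2 _ (isSInvFun_meet hy hz) meet_le_left meet_le_right
  have hV := isSLub_transClosure_sup hx hm.1
  have hyV : SLe n y (transClosure (x ⊔ m)) := fun a c hac =>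
    le_sup_left.trans (sup_le_transClosure_sup hy hz hyz hzy hmeet a c hac)
  exact ⟨hxy.1, hxy.2.1, hm.2.1.trans hxy.2.2.1, fun u hu hxu hmu =>
    (hxy.2.2.2 _ hV.1 hV.2.1 hyV).trans (hV.2.2.2 u hu hxu hmu)⟩

end JoinSemidistrib

end SWeakOrder

theorem s_weak_order_semidistributive_general (n : ℕ) (s : Fin n → ℕ)
    (x y z : Fin n → Fin n → ℕ)
    (hx : IsSInvFun n s x) (hy : IsSInvFun n s y) (hz : IsSInvFun n s z) :
    (∀ w m : Fin n → Fin n → ℕ,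
      IsSLub n s w x y → IsSLub n s w x z → IsSGlb n s m y z →
        IsSLub n s w x m) ∧
    (∀ w m : Fin n → Fin n → ℕ,
      IsSGlb n s w x y → IsSGlb n s w x z → IsSLub n s m y z →
        IsSGlb n s w x m) :=
  ⟨fun _ _ => SWeakOrder.join_semidistrib hx hy hz, fun _ _ hxy hxz hm =>
    SWeakOrder.isSGlb_of_isSLub_dual hxy.1 (SWeakOrder.join_semidistrib
      (SWeakOrder.isSInvFun_dual hx) (SWeakOrder.isSInvFun_dual hy)
      (SWeakOrder.isSInvFun_dual hz) hxy.dual hxz.dual (hm.dual hy.1 hz.1))⟩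

/-- The `s`-weak order is join-semidistributive and meet-semidistributive:
if `w` is simultaneously a least upper bound of `{x,y}` and of `{x,z}`, then
`w` is a least upper bound of `{x,m}` for `m` the greatest lower bound of
`{y,z}`; and dually. -/
theorem s_weak_order_semidistributive (n : ℕ) (hn : 1 ≤ n) (s : Fin n → ℕ)
    (x y z : Fin n → Fin n → ℕ)
    (hx : IsSInvFun n s x) (hy : IsSInvFun n s y) (hz : IsSInvFun n s z) :
    (∀ w m : Fin n → Fin n → ℕ,
      IsSLub n s w x y → IsSLub n s w x z → IsSGlb n s m y z →
        IsSLub n s w x m) ∧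
    (∀ w m : Fin n → Fin n → ℕ,
      IsSGlb n s w x y → IsSGlb n s w x z → IsSLub n s m y z →
        IsSGlb n s w x m) :=
  s_weak_order_semidistributive_general n s x y z hx hy hz
end
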